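/- Let F be a generic step skew product over a transitive subshift of finite type and let μ_1, μ_2 be two ergodic stationary measures of the associated random walk Π(F). Then either the intervals I_{μ_1,k} and I_{μ_2,k} are disjoint for every symbol k, or they coincide for every symbol k; and in the disjoint case they appear in the same vertical order on every interval I_k (i.e., if I_{μ_1,k} lies below I_{μ_2,k} for some k, then I_{μ_1,m} lies below I_{μ_2,m} for all m). -/

import Mathlib

open MeasureTheory Set Filter Topology
open scoped ENNReal

namespace PaperSSP

/-- Data of a step skew product over a transitive subshift of finite type, together with
the transition probabilities and stationary distribution defining a Markov measure. -/
structure Sys (N : ℕ) where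
  /-- transition (0-1) matrix of the subshift -/
  A : Fin N → Fin N → Bool
  /-- fiber maps -/
  f : Fin N → ℝ → ℝ
  /-- stochastic transition matrix -/
  P : Fin N → Fin N → ℝ
  /-- stationary distribution -/
  p : Fin N → ℝ
  transitive : ∃ n : ℕ, 0 < n ∧ ∀ i j : Fin N,
    0 < (((Matrix.of fun i j => if A i j then (1 : ℕ) else 0)) ^ n) i j
  f_meas : ∀ k, Measurable (f k)
  f_contDiff : ∀ k, ContDiffOn ℝ 1 (f k) (Icc 0 1)
  f_mono : ∀ k, StrictMonoOn (f k) (Icc 0 1)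
  f_deriv_pos : ∀ k, ∀ x ∈ Icc (0:ℝ) 1, 0 < derivWithin (f k) (Icc 0 1) x
  f_into : ∀ k, MapsTo (f k) (Icc 0 1) (Ioo 0 1)
  P_nonneg : ∀ i j, 0 ≤ P i j
  P_row : ∀ i, ∑ j, P i j = 1
  P_pos_iff : ∀ i j, (0 < P i j ↔ A i j = true)
  p_nonneg : ∀ i, 0 ≤ p i
  p_sum : ∑ i, p i = 1
  p_stationary : ∀ j, ∑ i, P i j * p i = p j

variable {N : ℕ}

/-- The two-sided shift space `Σ`. -/
abbrev Sig (S : Sys N) : Type := {ω : ℤ → Fin N // ∀ n : ℤ, S.A (ω n) (ω (n + 1)) = true}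

/-- The left shift `σ` on `Σ`. -/
def shift (S : Sys N) (ω : Sig S) : Sig S := ⟨fun n => ω.1 (n + 1), fun n => ω.2 (n + 1)⟩

/-- The step skew product `F (ω, x) = (σ ω, f_{ω₀} x)`. -/
def Fmap (S : Sys N) : Sig S × ℝ → Sig S × ℝ := fun q => (shift S q.1, S.f (q.1.1 0) q.2)

/-- `ν` is the Markov measure on `Σ` given by the cylinder formula. -/
def IsMarkovMeasure (S : Sys N) (ν : Measure (Sig S)) : Prop :=
  IsProbabilityMeasure ν ∧
  ∀ k m : ℤ, k ≤ m → ∀ w : ℤ → Fin N,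
    ν {ω : Sig S | ∀ i : ℤ, k ≤ i → i ≤ m → ω.1 i = w i} =
      ENNReal.ofReal (S.p (w k) * ∏ i ∈ Finset.Icc k (m - 1), S.P (w i) (w (i + 1)))

/-- Admissibility of a pair of symbols. -/
def Adm (S : Sys N) (i j : Fin N) : Prop := S.A i j = true

/-- The composition `f_{w_n} ∘ ⋯ ∘ f_{w_1}` along a word `l = [w_1, …, w_n]`. -/
def wordMap (S : Sys N) (l : List (Fin N)) : ℝ → ℝ := fun x => l.foldl (fun y k => S.f k y) x

/-- A simple return: an admissible word `w_1 … w_n` of pairwise distinct symbols with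
`(w_n, w_1)` admissible; its map is `wordMap` of the word. -/
def IsSimpleReturn (S : Sys N) (l : List (Fin N)) : Prop :=
  l.Nodup ∧ l.Chain' (Adm S) ∧ ∃ a b, l.head? = some a ∧ l.getLast? = some b ∧ Adm S b a

/-- A simple transition: an admissible word `w_1 … w_{n+1}` (n ≥ 1) of pairwise distinct
symbols; its map is `transMap`, going from `I_{w_1}` to `I_{w_{n+1}}`. -/
def IsSimpleTransition (S : Sys N) (t : List (Fin N)) : Prop :=
  2 ≤ t.length ∧ t.Nodup ∧ t.Chain' (Adm S)

/-- The map `f_{w_n} ∘ ⋯ ∘ f_{w_1}` of the transition word `t = w_1 … w_{n+1}`. -/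
def transMap (S : Sys N) (t : List (Fin N)) : ℝ → ℝ := wordMap S t.dropLast

/-- Attracting (hyperbolic) fixed point. -/
def IsAttrFP (g : ℝ → ℝ) (x : ℝ) : Prop := g x = x ∧ deriv g x < 1

/-- Repelling (hyperbolic) fixed point. -/
def IsRepFP (g : ℝ → ℝ) (x : ℝ) : Prop := g x = x ∧ 1 < deriv g x

/-- The genericity conditions (1)–(3). -/
def IsGeneric (S : Sys N) : Prop :=
  (∀ l, IsSimpleReturn S l → ∀ x ∈ Icc (0:ℝ) 1, wordMap S l x = x →
      deriv (wordMap S l) x ≠ 1) ∧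
  (∀ l t l', IsSimpleReturn S l → IsSimpleTransition S t → IsSimpleReturn S l' →
      t.head? = l.head? → t.getLast? = l'.head? → ∀ x ∈ Icc (0:ℝ) 1,
      (IsAttrFP (wordMap S l) x → ¬ IsRepFP (wordMap S l') (transMap S t x)) ∧
      (IsRepFP (wordMap S l) x → ¬ IsAttrFP (wordMap S l') (transMap S t x))) ∧
  ¬ ∃ a : Fin N → ℝ, (∀ k, a k ∈ Icc (0:ℝ) 1) ∧ ∀ i j, Adm S i j → S.f i (a i) = a j

/-- The strip between two graphs. -/
def Strip (S : Sys N) (φ₁ φ₂ : Sig S → ℝ) : Set (Sig S × ℝ) :=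
  {q | φ₁ q.1 ≤ q.2 ∧ q.2 ≤ φ₂ q.1}

/-- A strip `S_{φ₁, φ₂}` with `φ₁ < φ₂` continuous, `I`-valued. -/
def IsStrip (S : Sys N) (T : Set (Sig S × ℝ)) : Prop :=
  ∃ φ₁ φ₂ : Sig S → ℝ, Continuous φ₁ ∧ Continuous φ₂ ∧ (∀ ω, φ₁ ω ∈ Icc (0:ℝ) 1) ∧
    (∀ ω, φ₂ ω ∈ Icc (0:ℝ) 1) ∧ (∀ ω, φ₁ ω < φ₂ ω) ∧ T = Strip S φ₁ φ₂

/-- Trapping strip: `F(S) ⊆ int S`. -/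
def IsTrappingStrip (S : Sys N) (T : Set (Sig S × ℝ)) : Prop :=
  IsStrip S T ∧ Fmap S '' T ⊆ interior T

/-- Inverse trapping strip: `F⁻¹(S) ⊆ int S`. -/
def IsInvTrappingStrip (S : Sys N) (T : Set (Sig S × ℝ)) : Prop :=
  IsStrip S T ∧ Fmap S ⁻¹' T ⊆ interior T

/-- The maximal attractor `⋂ₙ Fⁿ(T)` of a (trapping) strip. -/
def Amax (S : Sys N) (T : Set (Sig S × ℝ)) : Set (Sig S × ℝ) := ⋂ n : ℕ, (Fmap S)^[n] '' T

/-- The repeller `⋂ₙ F⁻ⁿ(T)` of an (inverse trapping) strip. -/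
def Repel (S : Sys N) (T : Set (Sig S × ℝ)) : Set (Sig S × ℝ) := ⋂ n : ℕ, (Fmap S)^[n] ⁻¹' T

/-- The metric `d(ω, ω') = 2^{-min{|n| : ωₙ ≠ ω'ₙ}}` on `Σ`. -/
noncomputable def dS (S : Sys N) (ω ω' : Sig S) : ℝ :=
  letI := Classical.propDecidable (ω = ω')
  if ω = ω' then 0
  else (2:ℝ) ^ (-((sInf {k : ℕ | ∃ n : ℤ, n.natAbs = k ∧ ω.1 n ≠ ω'.1 n} : ℕ) : ℤ))

/-- The fiber `B_ω` of a subset of `Σ × ℝ`. -/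
def fiber {S : Sys N} (B : Set (Sig S × ℝ)) (ω : Sig S) : Set ℝ := {x | (ω, x) ∈ B}

/-- A bony graph w.r.t. `ν`: closed, every fiber a closed interval, a.e. fiber a point. -/
def IsBony (S : Sys N) (ν : Measure (Sig S)) (B : Set (Sig S × ℝ)) : Prop :=
  IsClosed B ∧ (∀ ω, ∃ a b : ℝ, a ≤ b ∧ fiber B ω = Icc a b) ∧
  ∀ᵐ ω ∂ν, ∃ x, fiber B ω = {x}

/-- A continuous-bony graph: a bony graph with upper-semicontinuous fibers. -/
def IsCBG (S : Sys N) (ν : Measure (Sig S)) (B : Set (Sig S × ℝ)) : Prop :=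
  IsBony S ν B ∧ ∀ ω : Sig S, ∀ ε > (0:ℝ), ∃ δ > (0:ℝ), ∀ ω', dS S ω ω' < δ →
    ∀ x ∈ fiber B ω', ∃ y ∈ fiber B ω, |x - y| < ε

/-- The standard measure: product of `ν` with Lebesgue measure on the fiber. -/
noncomputable def stdMeas (S : Sys N) (ν : Measure (Sig S)) : Measure (Sig S × ℝ) :=
  ν.prod (volume.restrict (Icc 0 1))

/-- A stationary measure of the random walk `Π(F)`, as a family `μ_k` of measures
on the fibers with total mass 1, supported on `I`, with `∑ᵢ π_{ij} (f_i)_* μ_i = μ_j`. -/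
def IsStationary (S : Sys N) (μ : Fin N → Measure ℝ) : Prop :=
  (∀ k, IsFiniteMeasure (μ k)) ∧ (∑ k, μ k univ) = 1 ∧ (∀ k, μ k (Icc (0:ℝ) 1)ᶜ = 0) ∧
  ∀ j, μ j = ∑ i, ENNReal.ofReal (S.P i j) • (μ i).map (S.f i)

/-- Ergodic stationary measure: an extreme point of the convex set of stationary measures. -/
def IsErgodicStationary (S : Sys N) (μ : Fin N → Measure ℝ) : Prop :=
  IsStationary S μ ∧ ∀ μ₁ μ₂ : Fin N → Measure ℝ, IsStationary S μ₁ → IsStationary S μ₂ →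
    ∀ t : ℝ≥0∞, 0 < t → t < 1 → (∀ k, μ k = t • μ₁ k + (1 - t) • μ₂ k) → μ₁ = μ₂

/-- The (topological) support of a measure on `ℝ`. -/
def msupport (m : Measure ℝ) : Set ℝ := {x | ∀ ε > (0:ℝ), 0 < m (Ioo (x - ε) (x + ε))}

/-- `A_{μ,k} = min supp μ_k`. -/
noncomputable def Alow (m : Measure ℝ) : ℝ := sInf (msupport m)

/-- `B_{μ,k} = max supp μ_k`. -/
noncomputable def Bhigh (m : Measure ℝ) : ℝ := sSup (msupport m)

/-- A domain: a disjoint union of nonempty subintervals `D_k ⊆ I_k`. -/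
def IsDomain {N : ℕ} (D : Fin N → Set ℝ) : Prop :=
  ∀ k, (D k).Nonempty ∧ (D k).OrdConnected ∧ D k ⊆ Icc 0 1

/-- A trapping domain: `f_k(D_k) ⊆ int D_m` for all admissible `(k, m)`. -/
def IsTrappingDomain (S : Sys N) (D : Fin N → Set ℝ) : Prop :=
  IsDomain D ∧ ∀ k m, Adm S k m → S.f k '' D k ⊆ interior (D m)

/-- A nonstrictly trapping domain: `f_k(D_k) ⊆ D_m` for all admissible `(k, m)`. -/
def IsNSTrappingDomain (S : Sys N) (D : Fin N → Set ℝ) : Prop :=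
  IsDomain D ∧ ∀ k m, Adm S k m → S.f k '' D k ⊆ D m

/-- The one-sided shift space `Σ₊`. -/
abbrev Sig1 (S : Sys N) : Type := {ω : ℕ → Fin N // ∀ n : ℕ, S.A (ω n) (ω (n + 1)) = true}

/-- The one-sided left shift. -/
def shift1 (S : Sys N) (ω : Sig1 S) : Sig1 S := ⟨fun n => ω.1 (n + 1), fun n => ω.2 (n + 1)⟩

/-- The one-sided skew product `F₊`. -/
def Fmap1 (S : Sys N) : Sig1 S × ℝ → Sig1 S × ℝ := fun q => (shift1 S q.1, S.f (q.1.1 0) q.2)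

/-- The "forgetting the past" projection `π : Σ → Σ₊`. -/
def forget (S : Sys N) (ω : Sig S) : Sig1 S :=
  ⟨fun n => ω.1 n, fun n => by push_cast; exact ω.2 (n : ℤ)⟩

/-- The basin of a measure `m`: points whose time averages converge to `m`. -/
def Basin (S : Sys N) (m : Measure (Sig S × ℝ)) : Set (Sig S × ℝ) :=
  {q | ∀ g : C(Sig S × ℝ, ℝ),
    Tendsto (fun n : ℕ => (∑ i ∈ Finset.range n, g ((Fmap S)^[i] q)) / n) atTop
      (𝓝 (∫ q', g q' ∂m))}


/-!
The support hull `I_{μ,k} = [A_{μ,k}, B_{μ,k}]` of a stationary measure is forward invariant: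
`f_i` maps `I_{μ,i}` into `I_{μ,j}` for every admissible pair `(i, j)`.

If the hulls of `μ₁` and `μ₂` meet over one symbol, transitivity makes them meet over every
symbol, and the intersections `[a_k, b_k]` form a family of intervals mapped into each other.
The half-lines `x ≤ b_k` and `x ≥ a_k` are then invariant, so by ergodicity each of `μ₁`, `μ₂`
gives them either no mass or full mass. No mass would force `a_k = b_k` for all `k`, a family
of points with `f_i(a_i) = a_j` for all admissible `(i, j)`, which genericity (3) excludes; so
both hulls equal `[a_k, b_k]`.

If the hulls are disjoint over every symbol, the increasing maps `f_i` carry the strict order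
between them along admissible transitions, so by transitivity it is the same over every symbol.
-/

theorem reflTransGen_of_pow_apply_ne_zero {ι R : Type*} [Fintype ι] [DecidableEq ι] [Semiring R]
    (M : Matrix ι ι R) {n : ℕ} {i j : ι} (h : (M ^ n) i j ≠ 0) :
    Relation.ReflTransGen (fun k l => M k l ≠ 0) i j := by
  induction n generalizing j with
  | zero =>
    obtain rfl : i = j := by
      by_contra hij
      simp [Matrix.one_apply_ne hij] at h
    exact .refl
  | succ n ih =>
    rw [pow_succ, Matrix.mul_apply] at h
    obtain ⟨k, -, hk⟩ := Finset.exists_ne_zero_of_sum_ne_zero h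
    exact (ih (left_ne_zero_of_mul hk)).tail (right_ne_zero_of_mul hk)

namespace Sys

variable (S : Sys N)

theorem reflTransGen_adm (i j : Fin N) : Relation.ReflTransGen (Adm S) i j := by
  obtain ⟨n, -, hpos⟩ := S.transitive
  refine Relation.ReflTransGen.mono (fun k l hkl => ?_) i j
    (reflTransGen_of_pow_apply_ne_zero _ (hpos i j).ne')
  simpa [Adm] using hkl

variable {S}

theorem propagate {Q : Fin N → Prop} (hstep : ∀ i j, Adm S i j → Q i → Q j) {i : Fin N}
    (hi : Q i) (j : Fin N) : Q j := by
  induction S.reflTransGen_adm i j with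
  | refl => exact hi
  | tail _ hadm ih => exact hstep _ _ hadm ih

theorem forall_or_forall {P Q : Fin N → Prop} (hP : ∀ i j, Adm S i j → P i → P j)
    (h : ∀ k, P k ∨ Q k) : (∀ k, P k) ∨ ∀ k, Q k := by
  by_cases hex : ∃ k, P k
  · obtain ⟨k, hk⟩ := hex
    exact Or.inl (propagate hP hk)
  · rw [not_exists] at hex
    exact Or.inr fun k => (h k).resolve_left (hex k)

end Sys

section Support

variable {m : Measure ℝ} {t x : ℝ}

theorem msupport_eq_support (m : Measure ℝ) : msupport m = m.support := by
  ext x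
  rw [Metric.nhds_basis_ball.mem_measureSupport]
  simp [msupport, Real.ball_eq_Ioo]

theorem Alow_mem_support (hm : m ≠ 0) (hbdd : BddBelow m.support) : Alow m ∈ m.support := by
  rw [Alow, msupport_eq_support]
  exact Measure.isClosed_support.csInf_mem (Measure.nonempty_support hm) hbdd

theorem Bhigh_mem_support (hm : m ≠ 0) (hbdd : BddAbove m.support) : Bhigh m ∈ m.support := by
  rw [Bhigh, msupport_eq_support]
  exact Measure.isClosed_support.csSup_mem (Measure.nonempty_support hm) hbdd

theorem Alow_le_of_mem_support (hbdd : BddBelow m.support) (hx : x ∈ m.support) :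
    Alow m ≤ x := by
  rw [Alow, msupport_eq_support]
  exact csInf_le hbdd hx

theorem le_Bhigh_of_mem_support (hbdd : BddAbove m.support) (hx : x ∈ m.support) :
    x ≤ Bhigh m := by
  rw [Bhigh, msupport_eq_support]
  exact le_csSup hbdd hx

theorem le_Alow_of_measure_Iio_eq_zero (hm : m ≠ 0) (hbdd : BddBelow m.support)
    (h : m (Iio t) = 0) : t ≤ Alow m := by
  by_contra! ht
  exact ((Measure.mem_support_iff_forall _).mp (Alow_mem_support hm hbdd) _
    (Iio_mem_nhds ht)).ne' h

theorem Bhigh_le_of_measure_Ioi_eq_zero (hm : m ≠ 0) (hbdd : BddAbove m.support)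
    (h : m (Ioi t) = 0) : Bhigh m ≤ t := by
  by_contra! ht
  exact ((Measure.mem_support_iff_forall _).mp (Bhigh_mem_support hm hbdd) _
    (Ioi_mem_nhds ht)).ne' h

end Support

noncomputable def transfer (S : Sys N) (μ : Fin N → Measure ℝ) (j : Fin N) : Measure ℝ :=
  ∑ i, ENNReal.ofReal (S.P i j) • (μ i).map (S.f i)

noncomputable def totalMass (μ : Fin N → Measure ℝ) : ℝ≥0∞ := ∑ k, μ k univ

/-- The interval `I_{μ,k} = [A_{μ,k}, B_{μ,k}]` for `m = μ_k`. -/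
def supportHull (m : Measure ℝ) : Set ℝ := Icc (Alow m) (Bhigh m)

section Transfer

variable (S : Sys N) (μ ν : Fin N → Measure ℝ)

theorem transfer_apply (j : Fin N) {E : Set ℝ} (hE : MeasurableSet E) :
    transfer S μ j E = ∑ i, ENNReal.ofReal (S.P i j) * μ i (S.f i ⁻¹' E) := by
  simp [transfer, Measure.map_apply (S.f_meas _) hE]

theorem transfer_add : transfer S (μ + ν) = transfer S μ + transfer S ν := by
  funext j
  simp only [transfer, Pi.add_apply, Measure.map_add _ _ (S.f_meas _), smul_add,
    Finset.sum_add_distrib]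

theorem transfer_smul (c : ℝ≥0∞) : transfer S (c • μ) = c • transfer S μ := by
  funext j
  simp only [transfer, Pi.smul_apply, Measure.map_smul, Finset.smul_sum, smul_comm c]

theorem totalMass_transfer : totalMass (transfer S μ) = totalMass μ := by
  simp_rw [totalMass, transfer_apply S μ _ MeasurableSet.univ, preimage_univ]
  rw [Finset.sum_comm]
  refine Finset.sum_congr rfl fun i _ => ?_
  rw [← Finset.sum_mul, ← ENNReal.ofReal_sum_of_nonneg fun j _ => S.P_nonneg i j, S.P_row i,
    ENNReal.ofReal_one, one_mul]

end Transfer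

section TotalMass

variable {μ ν : Fin N → Measure ℝ}

theorem totalMass_add : totalMass (μ + ν) = totalMass μ + totalMass ν := by
  simp [totalMass, Finset.sum_add_distrib]

theorem totalMass_smul (c : ℝ≥0∞) : totalMass (c • μ) = c * totalMass μ := by
  simp [totalMass, Finset.mul_sum]

theorem totalMass_eq_zero_iff : totalMass μ = 0 ↔ μ = 0 := by
  simp [totalMass, funext_iff]

theorem eq_of_le_of_totalMass_eq [∀ k, IsFiniteMeasure (μ k)] (hle : ∀ k, ν k ≤ μ k)
    (hmass : totalMass ν = totalMass μ) : ν = μ := by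
  funext k
  have : IsFiniteMeasure (ν k) := isFiniteMeasure_of_le _ (hle k)
  refine Measure.eq_of_le_of_measure_univ_eq (hle k) (le_antisymm (hle k univ) ?_)
  have hfin : ∑ l ∈ Finset.univ.erase k, μ l univ ≠ ∞ :=
    ENNReal.sum_ne_top.mpr fun l _ => measure_ne_top _ _
  refine (ENNReal.add_le_add_iff_right hfin).mp ?_
  calc μ k univ + ∑ l ∈ Finset.univ.erase k, μ l univ
      = totalMass ν := by
        rw [hmass, totalMass, Finset.add_sum_erase _ (fun l => μ l univ) (Finset.mem_univ k)]
    _ = ν k univ + ∑ l ∈ Finset.univ.erase k, ν l univ :=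
      (Finset.add_sum_erase _ _ (Finset.mem_univ k)).symm
    _ ≤ ν k univ + ∑ l ∈ Finset.univ.erase k, μ l univ :=
      add_le_add_right (Finset.sum_le_sum fun l _ => hle l univ) _

end TotalMass

namespace IsStationary

variable {S : Sys N} {μ : Fin N → Measure ℝ}

theorem totalMass_eq_one (hst : IsStationary S μ) : totalMass μ = 1 := hst.2.1

theorem measure_compl_Icc (hst : IsStationary S μ) (k : Fin N) : μ k (Icc 0 1)ᶜ = 0 :=
  hst.2.2.1 k

theorem transfer_eq (hst : IsStationary S μ) : transfer S μ = μ :=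
  funext fun j => (hst.2.2.2 j).symm

theorem le_apply (hst : IsStationary S μ) (i j : Fin N) {E : Set ℝ} (hE : MeasurableSet E) :
    ENNReal.ofReal (S.P i j) * μ i (S.f i ⁻¹' E) ≤ μ j E := by
  rw [← congrFun hst.transfer_eq j, transfer_apply S μ j hE]
  exact Finset.single_le_sum (f := fun i => ENNReal.ofReal (S.P i j) * μ i (S.f i ⁻¹' E))
    (fun _ _ => bot_le) (Finset.mem_univ i)

theorem ne_zero (hst : IsStationary S μ) (k : Fin N) : μ k ≠ 0 := by
  have hstep : ∀ i j, Adm S i j → μ i ≠ 0 → μ j ≠ 0 := by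
    intro i j hij hi hj
    have h := hst.le_apply i j MeasurableSet.univ
    rw [hj, Measure.coe_zero, Pi.zero_apply, nonpos_iff_eq_zero, mul_eq_zero, preimage_univ,
      Measure.measure_univ_eq_zero, ENNReal.ofReal_eq_zero, ← not_lt, S.P_pos_iff] at h
    exact h.elim (· hij) hi
  have hmass : totalMass μ ≠ 0 := by rw [hst.totalMass_eq_one]; exact one_ne_zero
  obtain ⟨i, -, hi⟩ := Finset.exists_ne_zero_of_sum_ne_zero hmass
  exact S.propagate hstep (fun h => hi (by rw [h]; rfl)) k

theorem support_subset (hst : IsStationary S μ) (k : Fin N) : (μ k).support ⊆ Icc 0 1 :=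
  Measure.support_subset_of_isClosed isClosed_Icc (mem_ae_iff.mpr (hst.measure_compl_Icc k))

theorem bddBelow_support (hst : IsStationary S μ) (k : Fin N) : BddBelow (μ k).support :=
  bddBelow_Icc.mono (hst.support_subset k)

theorem bddAbove_support (hst : IsStationary S μ) (k : Fin N) : BddAbove (μ k).support :=
  bddAbove_Icc.mono (hst.support_subset k)

theorem Alow_mem_support (hst : IsStationary S μ) (k : Fin N) : Alow (μ k) ∈ (μ k).support :=
  PaperSSP.Alow_mem_support (hst.ne_zero k) (hst.bddBelow_support k)

theorem Bhigh_mem_support (hst : IsStationary S μ) (k : Fin N) : Bhigh (μ k) ∈ (μ k).support :=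
  PaperSSP.Bhigh_mem_support (hst.ne_zero k) (hst.bddAbove_support k)

theorem Alow_le_Bhigh (hst : IsStationary S μ) (k : Fin N) : Alow (μ k) ≤ Bhigh (μ k) :=
  Alow_le_of_mem_support (hst.bddBelow_support k) (hst.Bhigh_mem_support k)

theorem supportHull_subset (hst : IsStationary S μ) (k : Fin N) : supportHull (μ k) ⊆ Icc 0 1 :=
  Icc_subset_Icc (hst.support_subset k (hst.Alow_mem_support k)).1
    (hst.support_subset k (hst.Bhigh_mem_support k)).2

theorem mapsTo_support (hst : IsStationary S μ) {i j : Fin N} (hij : Adm S i j) :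
    MapsTo (S.f i) (μ i).support (μ j).support := by
  intro x hx
  rw [(nhds_basis_opens _).mem_measureSupport]
  rintro U ⟨hxU, hU⟩
  have hcont : ContinuousWithinAt (S.f i) (Icc 0 1) x :=
    (S.f_contDiff i).continuousOn x (hst.support_subset i hx)
  obtain ⟨W, hW, hWU⟩ := mem_nhdsWithin_iff_exists_mem_nhds_inter.mp
    (hcont.preimage_mem_nhdsWithin (hU.mem_nhds hxU))
  have hpos : 0 < μ i (S.f i ⁻¹' U) := calc
    0 < μ i W := (Measure.mem_support_iff_forall x).mp hx W hW
    _ = μ i (W ∩ Icc 0 1) := (measure_inter_conull (hst.measure_compl_Icc i)).symm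
    _ ≤ μ i (S.f i ⁻¹' U) := measure_mono hWU
  calc 0 < ENNReal.ofReal (S.P i j) * μ i (S.f i ⁻¹' U) :=
        ENNReal.mul_pos (ENNReal.ofReal_pos.mpr ((S.P_pos_iff i j).mpr hij)).ne' hpos.ne'
    _ ≤ μ j U := hst.le_apply i j hU.measurableSet

theorem mapsTo_supportHull (hst : IsStationary S μ) {i j : Fin N} (hij : Adm S i j) :
    MapsTo (S.f i) (supportHull (μ i)) (supportHull (μ j)) := by
  intro x hx
  have hxI := hst.supportHull_subset i hx
  have hmono := (S.f_mono i).monotoneOn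
  have hA := hst.Alow_mem_support i
  have hB := hst.Bhigh_mem_support i
  exact ⟨(Alow_le_of_mem_support (hst.bddBelow_support j)
      (hst.mapsTo_support hij hA)).trans (hmono (hst.support_subset i hA) hxI hx.1),
    (hmono hxI (hst.support_subset i hB) hx.2).trans (le_Bhigh_of_mem_support
      (hst.bddAbove_support j) (hst.mapsTo_support hij hB))⟩

-- The pushforward of `μ|K` is carried by `K` and dominated by `μ`, hence by `μ|K`;
-- equal total masses force equality.
theorem transfer_restrict_eq (hst : IsStationary S μ) {K : Fin N → Set ℝ}
    (hK : ∀ k, MeasurableSet (K k))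
    (hinv : ∀ i j, Adm S i j → MapsTo (S.f i) (K i ∩ Icc 0 1) (K j)) :
    transfer S (fun k => (μ k).restrict (K k)) = fun k => (μ k).restrict (K k) := by
  set μ' : Fin N → Measure ℝ := fun k => (μ k).restrict (K k)
  set μ'' : Fin N → Measure ℝ := fun k => (μ k).restrict (K k)ᶜ
  have hsplit : μ' + μ'' = μ := funext fun k => Measure.restrict_add_restrict_compl (hK k)
  have := hst.1
  have hle : ∀ j, transfer S μ' j ≤ μ j := fun j => calc
    transfer S μ' j ≤ transfer S μ' j + transfer S μ'' j := Measure.le_add_right le_rfl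
    _ = μ j := by rw [← Pi.add_apply, ← transfer_add, hsplit, hst.transfer_eq]
  have hnull : ∀ j, transfer S μ' j (K j)ᶜ = 0 := by
    intro j
    rw [transfer_apply S μ' j (hK j).compl]
    refine Finset.sum_eq_zero fun i _ => ?_
    rcases (S.P_nonneg i j).eq_or_lt with hP | hP
    · simp [← hP]
    refine mul_eq_zero_of_right _ ?_
    rw [Measure.restrict_apply ((hK j).compl.preimage (S.f_meas i))]
    refine measure_mono_null ?_ (hst.measure_compl_Icc i)
    rintro x ⟨hxj, hxi⟩ hxI
    exact hxj (hinv i j ((S.P_pos_iff i j).mp hP) ⟨hxi, hxI⟩)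
  refine eq_of_le_of_totalMass_eq (fun j => ?_) (totalMass_transfer S μ')
  calc transfer S μ' j = (transfer S μ' j).restrict (K j) :=
        (Measure.restrict_eq_self_of_ae_mem (hnull j)).symm
    _ ≤ μ' j := Measure.restrict_mono_measure (hle j) _

theorem transfer_eq_of_add (hst : IsStationary S μ) {μ' μ'' : Fin N → Measure ℝ}
    (hsplit : μ' + μ'' = μ) (h' : transfer S μ' = μ') : transfer S μ'' = μ'' := by
  have := hst.1
  funext j
  have : IsFiniteMeasure (μ' j) :=
    isFiniteMeasure_of_le (μ j) (congrFun hsplit j ▸ Measure.le_add_right le_rfl)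
  refine (Measure.add_right_inj (μ' j) _ _).mp ?_
  calc μ' j + transfer S μ'' j = transfer S (μ' + μ'') j := by
        rw [transfer_add, Pi.add_apply, h']
    _ = μ' j + μ'' j := by rw [hsplit, hst.transfer_eq, ← hsplit, Pi.add_apply]

theorem inv_smul_of_le (hst : IsStationary S μ) {ν : Fin N → Measure ℝ}
    (hle : ∀ k, ν k ≤ μ k) (hν : transfer S ν = ν) (h0 : totalMass ν ≠ 0) :
    IsStationary S ((totalMass ν)⁻¹ • ν) := by
  have := hst.1
  have hfin : totalMass ν ≠ ∞ := by
    refine ne_top_of_le_ne_top (b := totalMass μ) ?_ (Finset.sum_le_sum fun k _ => hle k univ)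
    rw [hst.totalMass_eq_one]
    exact ENNReal.one_ne_top
  refine ⟨fun k => ⟨?_⟩, ?_, fun k => ?_, fun j => ?_⟩
  · exact ENNReal.mul_lt_top (ENNReal.inv_lt_top.mpr (pos_iff_ne_zero.mpr h0))
      (((hle k) univ).trans_lt (measure_lt_top _ _))
  · exact (totalMass_smul _).trans (ENNReal.inv_mul_cancel h0 hfin)
  · exact mul_eq_zero_of_right _
      (nonpos_iff_eq_zero.mp ((hle k _).trans (hst.measure_compl_Icc k).le))
  · change _ = transfer S _ j
    rw [transfer_smul, hν]

end IsStationary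

theorem IsGeneric.exists_lt_of_mapsTo {S : Sys N} (hgen : IsGeneric S) {a b : Fin N → ℝ}
    (ha : ∀ k, a k ∈ Icc 0 1) (hab : ∀ k, a k ≤ b k)
    (hmaps : ∀ i j, Adm S i j → MapsTo (S.f i) (Icc (a i) (b i)) (Icc (a j) (b j))) :
    ∃ k, a k < b k := by
  by_contra! hba
  refine hgen.2.2 ⟨a, ha, fun i j hij => ?_⟩
  have h := hmaps i j hij ⟨le_rfl, hab i⟩
  exact le_antisymm (h.2.trans (hba j)) h.1

namespace IsErgodicStationary

variable {S : Sys N} {μ : Fin N → Measure ℝ}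

-- Normalising `μ'` and `μ''` writes `μ` as a proper convex combination of stationary measures;
-- extremality makes the two equal, which mutually singular measures cannot be.
theorem eq_zero_or_eq_zero (herg : IsErgodicStationary S μ) {μ' μ'' : Fin N → Measure ℝ}
    (hsplit : μ' + μ'' = μ) (h' : transfer S μ' = μ') (h'' : transfer S μ'' = μ'')
    (hsing : ∀ k, μ' k ⟂ₘ μ'' k) : μ' = 0 ∨ μ'' = 0 := by
  obtain ⟨hst, hext⟩ := herg
  by_contra! hne
  have h0' : totalMass μ' ≠ 0 := totalMass_eq_zero_iff.not.mpr hne.1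
  have h0'' : totalMass μ'' ≠ 0 := totalMass_eq_zero_iff.not.mpr hne.2
  have hmass : totalMass μ' + totalMass μ'' = 1 := by
    rw [← totalMass_add, hsplit, hst.totalMass_eq_one]
  have hfin' : totalMass μ' ≠ ∞ :=
    ne_top_of_le_ne_top ENNReal.one_ne_top (hmass ▸ le_self_add)
  have hfin'' : totalMass μ'' ≠ ∞ :=
    ne_top_of_le_ne_top ENNReal.one_ne_top (hmass ▸ le_add_self)
  have hst' := hst.inv_smul_of_le
    (fun k => congrFun hsplit k ▸ Measure.le_add_right le_rfl) h' h0'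
  have hst'' := hst.inv_smul_of_le
    (fun k => congrFun hsplit k ▸ Measure.le_add_left le_rfl) h'' h0''
  have heq := hext _ _ hst' hst'' (totalMass μ') (pos_iff_ne_zero.mpr h0')
    (hmass ▸ ENNReal.lt_add_right hfin' h0'') fun k => by
      rw [ENNReal.sub_eq_of_eq_add_rev hfin' hmass.symm, Pi.smul_apply, Pi.smul_apply, smul_smul,
        smul_smul, ENNReal.mul_inv_cancel h0' hfin', ENNReal.mul_inv_cancel h0'' hfin'',
        one_smul, one_smul, ← Pi.add_apply, hsplit]
  have hzero : (totalMass μ')⁻¹ • μ' = 0 := funext fun k => by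
    have hk := (((hsing k).smul (totalMass μ')⁻¹).symm.smul (totalMass μ'')⁻¹).symm
    change ((totalMass μ')⁻¹ • μ') k ⟂ₘ ((totalMass μ'')⁻¹ • μ'') k at hk
    rwa [← heq, Measure.MutuallySingular.self_iff] at hk
  have hone := hst'.totalMass_eq_one
  rw [hzero, totalMass_eq_zero_iff.mpr rfl] at hone
  exact zero_ne_one hone

theorem measure_eq_zero_or_compl (herg : IsErgodicStationary S μ) {K : Fin N → Set ℝ}
    (hK : ∀ k, MeasurableSet (K k))
    (hinv : ∀ i j, Adm S i j → MapsTo (S.f i) (K i ∩ Icc 0 1) (K j)) :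
    (∀ k, μ k (K k) = 0) ∨ ∀ k, μ k (K k)ᶜ = 0 := by
  have hsplit : (fun k => (μ k).restrict (K k)) + (fun k => (μ k).restrict (K k)ᶜ) = μ :=
    funext fun k => Measure.restrict_add_restrict_compl (hK k)
  have h' := herg.1.transfer_restrict_eq hK hinv
  have hsing : ∀ k, (μ k).restrict (K k) ⟂ₘ (μ k).restrict (K k)ᶜ := fun k =>
    ⟨(K k)ᶜ, (hK k).compl, by simp [Measure.restrict_apply (hK k).compl],
      by simp [Measure.restrict_apply (hK k)]⟩
  refine (herg.eq_zero_or_eq_zero hsplit h' (herg.1.transfer_eq_of_add hsplit h') hsing).imp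
    (fun h k => ?_) (fun h k => ?_)
  · exact Measure.restrict_eq_zero.mp (congrFun h k)
  · exact Measure.restrict_eq_zero.mp (congrFun h k)

theorem le_Alow_or_Bhigh_le (herg : IsErgodicStationary S μ) {b : Fin N → ℝ}
    (hb : ∀ k, b k ∈ Icc 0 1) (hinv : ∀ i j, Adm S i j → S.f i (b i) ≤ b j) :
    (∀ k, b k ≤ Alow (μ k)) ∨ ∀ k, Bhigh (μ k) ≤ b k := by
  have hK : ∀ i j, Adm S i j → MapsTo (S.f i) (Iic (b i) ∩ Icc 0 1) (Iic (b j)) :=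
    fun i j hij x hx => ((S.f_mono i).monotoneOn hx.2 (hb i) hx.1).trans (hinv i j hij)
  refine (herg.measure_eq_zero_or_compl (fun _ => measurableSet_Iic) hK).imp
    (fun h k => ?_) (fun h k => ?_)
  · exact le_Alow_of_measure_Iio_eq_zero (herg.1.ne_zero k)
      (herg.1.bddBelow_support k) (measure_mono_null Iio_subset_Iic_self (h k))
  · exact Bhigh_le_of_measure_Ioi_eq_zero (herg.1.ne_zero k)
      (herg.1.bddAbove_support k) (by rw [← compl_Iic]; exact h k)

theorem Bhigh_le_or_le_Alow (herg : IsErgodicStationary S μ) {a : Fin N → ℝ}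
    (ha : ∀ k, a k ∈ Icc 0 1) (hinv : ∀ i j, Adm S i j → a j ≤ S.f i (a i)) :
    (∀ k, Bhigh (μ k) ≤ a k) ∨ ∀ k, a k ≤ Alow (μ k) := by
  have hK : ∀ i j, Adm S i j → MapsTo (S.f i) (Ici (a i) ∩ Icc 0 1) (Ici (a j)) :=
    fun i j hij x hx => (hinv i j hij).trans ((S.f_mono i).monotoneOn (ha i) hx.2 hx.1)
  refine (herg.measure_eq_zero_or_compl (fun _ => measurableSet_Ici) hK).imp
    (fun h k => ?_) (fun h k => ?_)
  · exact Bhigh_le_of_measure_Ioi_eq_zero (herg.1.ne_zero k)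
      (herg.1.bddAbove_support k) (measure_mono_null Ioi_subset_Ici_self (h k))
  · exact le_Alow_of_measure_Iio_eq_zero (herg.1.ne_zero k)
      (herg.1.bddBelow_support k) (by rw [← compl_Ici]; exact h k)

theorem endpoints_eq_of_mapsTo (herg : IsErgodicStationary S μ) (hgen : IsGeneric S)
    {a b : Fin N → ℝ} (hab : ∀ k, a k ≤ b k) (ha : ∀ k, Alow (μ k) ≤ a k)
    (hb : ∀ k, b k ≤ Bhigh (μ k))
    (hmaps : ∀ i j, Adm S i j → MapsTo (S.f i) (Icc (a i) (b i)) (Icc (a j) (b j)))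
    (k : Fin N) : Alow (μ k) = a k ∧ Bhigh (μ k) = b k := by
  have hJ : ∀ k, Icc (a k) (b k) ⊆ Icc 0 1 := fun k =>
    (Icc_subset_Icc (ha k) (hb k)).trans (herg.1.supportHull_subset k)
  obtain ⟨k₀, hk₀⟩ :=
    hgen.exists_lt_of_mapsTo (fun k => hJ k (left_mem_Icc.mpr (hab k))) hab hmaps
  have hB : ∀ k, Bhigh (μ k) ≤ b k :=
    (herg.le_Alow_or_Bhigh_le (fun k => hJ k (right_mem_Icc.mpr (hab k)))
      fun i j hij => (hmaps i j hij (right_mem_Icc.mpr (hab i))).2).resolve_left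
      fun h => ((h k₀).trans (ha k₀)).not_gt hk₀
  have hA : ∀ k, a k ≤ Alow (μ k) :=
    (herg.Bhigh_le_or_le_Alow (fun k => hJ k (left_mem_Icc.mpr (hab k)))
      fun i j hij => (hmaps i j hij (left_mem_Icc.mpr (hab i))).1).resolve_left
      fun h => ((hb k₀).trans (h k₀)).not_gt hk₀
  exact ⟨(ha k).antisymm (hA k), (hB k).antisymm (hb k)⟩

end IsErgodicStationary

theorem endpoints_eq_of_supportHull_inter_nonempty {S : Sys N} {μ₁ μ₂ : Fin N → Measure ℝ}
    (hgen : IsGeneric S) (h₁ : IsErgodicStationary S μ₁) (h₂ : IsErgodicStationary S μ₂)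
    {k₀ : Fin N} (hk₀ : (supportHull (μ₁ k₀) ∩ supportHull (μ₂ k₀)).Nonempty)
    (k : Fin N) : Alow (μ₁ k) = Alow (μ₂ k) ∧ Bhigh (μ₁ k) = Bhigh (μ₂ k) := by
  set a : Fin N → ℝ := fun k => Alow (μ₁ k) ⊔ Alow (μ₂ k)
  set b : Fin N → ℝ := fun k => Bhigh (μ₁ k) ⊓ Bhigh (μ₂ k)
  have hinter : ∀ k, supportHull (μ₁ k) ∩ supportHull (μ₂ k) = Icc (a k) (b k) :=
    fun k => Icc_inter_Icc
  have hmaps : ∀ i j, Adm S i j → MapsTo (S.f i) (Icc (a i) (b i)) (Icc (a j) (b j)) :=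
    fun i j hij => by
      simpa only [hinter] using
        (h₁.1.mapsTo_supportHull hij).inter_inter (h₂.1.mapsTo_supportHull hij)
  have hab : ∀ k, a k ≤ b k := fun k => nonempty_Icc.mp <|
    S.propagate (Q := fun k => (Icc (a k) (b k)).Nonempty) (fun i j hij => (hmaps i j hij).nonempty)
      (hinter k₀ ▸ hk₀) k
  have e₁ := h₁.endpoints_eq_of_mapsTo hgen hab (fun _ => le_sup_left) (fun _ => inf_le_left)
    hmaps k
  have e₂ := h₂.endpoints_eq_of_mapsTo hgen hab (fun _ => le_sup_right) (fun _ => inf_le_right)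
    hmaps k
  exact ⟨e₁.1.trans e₂.1.symm, e₁.2.trans e₂.2.symm⟩

theorem lt_or_lt_of_disjoint_Icc {α : Type*} [LinearOrder α] {a b c d : α} (hab : a ≤ b)
    (hcd : c ≤ d) (h : Disjoint (Icc a b) (Icc c d)) : b < c ∨ d < a := by
  by_contra! hle
  exact disjoint_left.mp h ⟨le_max_left a c, max_le hab hle.1⟩
    ⟨le_max_right a c, max_le hle.2 hcd⟩

theorem Bhigh_lt_Alow_of_adm {S : Sys N} {μ₁ μ₂ : Fin N → Measure ℝ}
    (hst₁ : IsStationary S μ₁) (hst₂ : IsStationary S μ₂) {i j : Fin N} (hij : Adm S i j)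
    (hdisj : Disjoint (supportHull (μ₁ j)) (supportHull (μ₂ j)))
    (h : Bhigh (μ₁ i) < Alow (μ₂ i)) : Bhigh (μ₁ j) < Alow (μ₂ j) := by
  have hB := hst₁.supportHull_subset i (right_mem_Icc.mpr (hst₁.Alow_le_Bhigh i))
  have hA := hst₂.supportHull_subset i (left_mem_Icc.mpr (hst₂.Alow_le_Bhigh i))
  have hx := hst₁.mapsTo_supportHull hij (right_mem_Icc.mpr (hst₁.Alow_le_Bhigh i))
  have hy := hst₂.mapsTo_supportHull hij (left_mem_Icc.mpr (hst₂.Alow_le_Bhigh i))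
  refine (lt_or_lt_of_disjoint_Icc (hst₁.Alow_le_Bhigh j) (hst₂.Alow_le_Bhigh j)
    hdisj).resolve_right fun h' => lt_asymm (S.f_mono i hB hA h) (hy.2.trans_lt (h'.trans_le hx.1))

/-- the support intervals of two ergodic stationary measures either coincide
for every symbol or are disjoint for every symbol, in the same vertical order. -/
theorem statement14 {N : ℕ} (S : Sys N) (hgen : IsGeneric S)
    (μ₁ μ₂ : Fin N → Measure ℝ)
    (h₁ : IsErgodicStationary S μ₁) (h₂ : IsErgodicStationary S μ₂) :
    (∀ k, Alow (μ₁ k) = Alow (μ₂ k) ∧ Bhigh (μ₁ k) = Bhigh (μ₂ k)) ∨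
    (∀ k, Bhigh (μ₁ k) < Alow (μ₂ k)) ∨ (∀ k, Bhigh (μ₂ k) < Alow (μ₁ k)) := by
  by_cases hmeet : ∃ k, (supportHull (μ₁ k) ∩ supportHull (μ₂ k)).Nonempty
  · obtain ⟨k₀, hk₀⟩ := hmeet
    exact Or.inl (endpoints_eq_of_supportHull_inter_nonempty hgen h₁ h₂ hk₀)
  have hdisj : ∀ k, Disjoint (supportHull (μ₁ k)) (supportHull (μ₂ k)) := fun k =>
    disjoint_iff_inter_eq_empty.mpr (not_nonempty_iff_eq_empty.mp (not_exists.mp hmeet k))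
  exact Or.inr <| S.forall_or_forall
    (fun i j hij => Bhigh_lt_Alow_of_adm h₁.1 h₂.1 hij (hdisj j))
    fun k => lt_or_lt_of_disjoint_Icc (h₁.1.Alow_le_Bhigh k) (h₂.1.Alow_le_Bhigh k) (hdisj k)

end PaperSSP
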